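/- arXiv:2503.08309 — 5 statements merged into one kernel-verified Lean document; each statement's English description precedes it below -/
import Mathlib

section
/- Let n ∈ ℕ with n ≥ 2, let W : ℝ → ℝ satisfy (W1)–(W3), and let λ_n > 0 be a constant for which the nonlinear interpolation inequality holds on every open bounded interval. Then for every u ∈ W^{n,2}_loc(ℝ) one has λ_n ∫_ℝ (u^{(n−1)})² dx ≤ ∫_ℝ W(u) + (u^{(n)})² dx (as an inequality in [0, +∞]). -/
open MeasureTheory Set Filter Topology

/-- **Nonlinear interpolation on the real line (Corollary 3.2).**
Let `n ≥ 2`, let `W` satisfy (W1)–(W3), and let `λₙ > 0` be a constant for which the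
nonlinear interpolation inequality holds on every open bounded interval.  Then for every
`u ∈ W^{n,2}_loc(ℝ)` one has
`λₙ ∫_ℝ (u^{(n-1)})² ≤ ∫_ℝ W(u) + (u^{(n)})²` as an inequality in `[0, ∞]`. -/
theorem nonlinear_interpolation_real_line
    (n : ℕ) (hn : 2 ≤ n) (W : ℝ → ℝ) (L : ℝ) (hL : 0 < L)
    (hWcont : Continuous W) (hWnonneg : ∀ t, 0 ≤ W t)
    (hWzero : ∀ t, W t = 0 ↔ (t = 1 ∨ t = -1))
    (hWcoerpos : ∀ t : ℝ, 0 < t → L * (t - 1) ^ 2 ≤ W t)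
    (hWcoerneg : ∀ t : ℝ, t < 0 → L * (t + 1) ^ 2 ≤ W t)
    (lam : ℝ) (hlam : 0 < lam)
    (hint : ∀ a b : ℝ, a < b → ∀ u : ℝ → ℝ,
        ContDiffOn ℝ n u (Set.Ioo a b) →
        (∀ k ≤ n, IntegrableOn
          (fun x => (iteratedDerivWithin k u (Set.Ioo a b) x) ^ 2) (Set.Ioo a b)) →
        IntegrableOn (fun x => W (u x)) (Set.Ioo a b) →
        lam * ∫ x in Set.Ioo a b, (iteratedDerivWithin (n - 1) u (Set.Ioo a b) x) ^ 2 ≤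
          (1 / (b - a) ^ (2 * n - 2)) * (∫ x in Set.Ioo a b, W (u x)) +
            (b - a) ^ 2 * ∫ x in Set.Ioo a b, (iteratedDerivWithin n u (Set.Ioo a b) x) ^ 2)
    (u : ℝ → ℝ) (hu : ContDiff ℝ n u) :
    ENNReal.ofReal lam * ∫⁻ x : ℝ, ENNReal.ofReal ((iteratedDeriv (n - 1) u x) ^ 2) ≤
      ∫⁻ x : ℝ, ENNReal.ofReal (W (u x) + (iteratedDeriv n u x) ^ 2) := by
  have hgc : Continuous fun x => (iteratedDeriv (n - 1) u x) ^ 2 :=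
    (hu.continuous_iteratedDeriv (n - 1) (by exact_mod_cast Nat.sub_le n 1)).pow 2
  have hWuc : Continuous fun x => W (u x) := hWcont.comp hu.continuous
  have hdnc : Continuous fun x => (iteratedDeriv n u x) ^ 2 :=
    (hu.continuous_iteratedDeriv n le_rfl).pow 2
  have hhc : Continuous fun x => W (u x) + (iteratedDeriv n u x) ^ 2 := hWuc.add hdnc
  set g : ℝ → ℝ := fun x => (iteratedDeriv (n - 1) u x) ^ 2 with hg
  set h : ℝ → ℝ := fun x => W (u x) + (iteratedDeriv n u x) ^ 2 with hh
  have hgnn : ∀ x, 0 ≤ g x := fun x => sq_nonneg _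
  have hhnn : ∀ x, 0 ≤ h x := fun x => add_nonneg (hWnonneg _) (sq_nonneg _)
  -- key interval estimate on unit intervals
  have key : ∀ k : ℤ, ENNReal.ofReal lam *
      ∫⁻ x in Set.Ioo (k : ℝ) (k + 1), ENNReal.ofReal (g x) ≤
      ∫⁻ x in Set.Ioo (k : ℝ) (k + 1), ENNReal.ofReal (h x) := by
    intro k
    set I : Set ℝ := Set.Ioo (k : ℝ) (k + 1) with hI
    have hab : (k : ℝ) < k + 1 := by linarith
    have hIopen : IsOpen I := isOpen_Ioo
    have heq : ∀ m : ℕ, Set.EqOn (iteratedDerivWithin m u I) (iteratedDeriv m u) I := by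
      intro m x hx
      rw [iteratedDerivWithin_eq_iteratedFDerivWithin, iteratedDeriv_eq_iteratedFDeriv,
        iteratedFDerivWithin_of_isOpen m hIopen hx]
    have hIsub : I ⊆ Set.Icc (k : ℝ) (k + 1) := Set.Ioo_subset_Icc_self
    have hintg : ∀ m : ℕ, m ≤ n → IntegrableOn (fun x => (iteratedDeriv m u x) ^ 2) I := by
      intro m hm
      exact (((hu.continuous_iteratedDeriv m (by exact_mod_cast hm)).pow 2).continuousOn.integrableOn_compact
        isCompact_Icc).mono_set hIsub
    have hder : ∀ m : ℕ, m ≤ n →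
        IntegrableOn (fun x => (iteratedDerivWithin m u I x) ^ 2) I := by
      intro m hm
      refine (hintg m hm).congr_fun (fun x hx => ?_) measurableSet_Ioo
      rw [heq m hx]
    have hW : IntegrableOn (fun x => W (u x)) I :=
      (hWuc.continuousOn.integrableOn_compact isCompact_Icc).mono_set hIsub
    have hmain := hint (k : ℝ) (k + 1) hab u hu.contDiffOn hder hW
    have hone : (k : ℝ) + 1 - k = 1 := by ring
    rw [hone, one_pow, one_pow, one_div_one, one_mul, one_mul] at hmain
    have hrw1 : ∫ x in I, (iteratedDerivWithin (n - 1) u I x) ^ 2 = ∫ x in I, g x := by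
      refine setIntegral_congr_fun measurableSet_Ioo (fun x hx => ?_)
      rw [hg]; simp only; rw [heq (n - 1) hx]
    have hrw2 : ∫ x in I, (iteratedDerivWithin n u I x) ^ 2
        = ∫ x in I, (iteratedDeriv n u x) ^ 2 := by
      refine setIntegral_congr_fun measurableSet_Ioo (fun x hx => ?_)
      rw [heq n hx]
    rw [hrw1, hrw2] at hmain
    have hsum : (∫ x in I, W (u x)) + ∫ x in I, (iteratedDeriv n u x) ^ 2
        = ∫ x in I, h x := (integral_add hW (hintg n le_rfl)).symm
    rw [hsum] at hmain
    have hgint : IntegrableOn g I :=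
      (hgc.continuousOn.integrableOn_compact isCompact_Icc).mono_set hIsub
    have hhint : IntegrableOn h I :=
      (hhc.continuousOn.integrableOn_compact isCompact_Icc).mono_set hIsub
    have e1 : ∫⁻ x in I, ENNReal.ofReal (g x) = ENNReal.ofReal (∫ x in I, g x) :=
      (ofReal_integral_eq_lintegral_ofReal hgint
        (Filter.Eventually.of_forall fun x => hgnn x)).symm
    have e2 : ∫⁻ x in I, ENNReal.ofReal (h x) = ENNReal.ofReal (∫ x in I, h x) :=
      (ofReal_integral_eq_lintegral_ofReal hhint
        (Filter.Eventually.of_forall fun x => hhnn x)).symm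
    rw [e1, e2, ← ENNReal.ofReal_mul hlam.le]
    exact ENNReal.ofReal_le_ofReal hmain
  -- decompose ℝ into unit intervals
  have hmeas : ∀ k : ℤ, MeasurableSet (Set.Ioo (k : ℝ) (k + 1)) := fun k => measurableSet_Ioo
  have hdisj : Pairwise (Function.onFun Disjoint fun k : ℤ => Set.Ioo (k : ℝ) (k + 1)) := by
    intro i j hij
    have : ∀ a b : ℤ, a < b → Disjoint (Set.Ioo (a : ℝ) (a + 1)) (Set.Ioo (b : ℝ) (b + 1)) := by
      intro a b hab
      rw [Set.Ioo_disjoint_Ioo]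
      have : (a : ℝ) + 1 ≤ b := by exact_mod_cast hab
      calc min ((a : ℝ) + 1) ((b : ℝ) + 1) ≤ (a : ℝ) + 1 := min_le_left _ _
        _ ≤ (b : ℝ) := this
        _ ≤ max (a : ℝ) (b : ℝ) := le_max_right _ _
    rcases lt_or_gt_of_ne hij with hlt | hgt
    · exact this i j hlt
    · exact (this j i hgt).symm
  have hcompl : volume ((⋃ k : ℤ, Set.Ioo (k : ℝ) (k + 1))ᶜ) = 0 := by
    refine measure_mono_null (fun x hx => ?_) ((Set.countable_range (Int.cast : ℤ → ℝ)).measure_zero _)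
    simp only [Set.mem_compl_iff, Set.mem_iUnion, not_exists, Set.mem_Ioo, not_and] at hx
    by_contra hxr
    have hne : x ≠ (⌊x⌋ : ℝ) := fun e => hxr ⟨⌊x⌋, e.symm⟩
    have h1 : (⌊x⌋ : ℝ) < x := lt_of_le_of_ne (Int.floor_le x) (Ne.symm hne)
    exact absurd (Int.lt_floor_add_one x) (by simpa using hx ⌊x⌋ h1)
  have hcov : ∀ f : ℝ → ENNReal,
      ∫⁻ x, f x = ∑' k : ℤ, ∫⁻ x in Set.Ioo (k : ℝ) (k + 1), f x := by
    intro f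
    rw [← setLIntegral_univ, ← lintegral_iUnion hmeas hdisj f]
    exact setLIntegral_congr (Filter.EventuallyEq.symm (ae_eq_univ.mpr hcompl))
  rw [hcov (fun x => ENNReal.ofReal (g x)), hcov (fun x => ENNReal.ofReal (h x)),
    ← ENNReal.tsum_mul_left]
  exact ENNReal.tsum_le_tsum key
end

section
/- Let n ∈ ℕ with n ≥ 2, let W satisfy (W1)–(W3), and let λ_n > 0 be a constant for which the nonlinear interpolation inequality holds on every open bounded interval. Let λ ∈ (0, λ_n), let I ⊂ ℝ be an open bounded interval, and let δ > 0. Then there exists ε₀ > 0 such that for all u ∈ W^{n,2}(I) and all ε ∈ (0, ε₀), one has (1 − λ/λ_n − δ) · G_ε^{0,n}[u] ≤ G_ε^{λ,n}[u]. -/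
open MeasureTheory Set Filter Topology

/-- The singularly perturbed energy
`G_ε^{λ,n}[u] = ∫_I (1/ε) W(u) - λ ε^{2n-3} (u^{(n-1)})² + ε^{2n-1} (u^{(n)})² dx`
on the interval `I = (a,b)`. -/
noncomputable def Gfun (W : ℝ → ℝ) (n : ℕ) (a b eps lam : ℝ) (u : ℝ → ℝ) : ℝ :=
  ∫ x in Set.Ioo a b,
    ((1 / eps) * W (u x)
      - lam * eps ^ (2 * n - 3) * (iteratedDerivWithin (n - 1) u (Set.Ioo a b) x) ^ 2
      + eps ^ (2 * n - 1) * (iteratedDerivWithin n u (Set.Ioo a b) x) ^ 2)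

lemma iterWithin_open' (k : ℕ) (u : ℝ → ℝ) {s : Set ℝ} (hs : IsOpen s) {x : ℝ} (hx : x ∈ s) :
    iteratedDerivWithin k u s x = iteratedDeriv k u x := by
  rw [iteratedDerivWithin_eq_iteratedFDerivWithin, iteratedDeriv_eq_iteratedFDeriv,
    iteratedFDerivWithin_of_isOpen k hs hx]

lemma sum_Ioo_integral (f : ℝ → ℝ) (a : ℝ) (h : ℝ) (hh : 0 < h) (N : ℕ)
    (hf : IntegrableOn f (Set.Ioo a (a + N * h))) :
    ∑ j ∈ Finset.range N, ∫ x in Set.Ioo (a + j * h) (a + (j + 1 : ℕ) * h), f x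
      = ∫ x in Set.Ioo a (a + N * h), f x := by
  have hsub : ∀ j : ℕ, j < N → Set.Ioo (a + j * h) (a + (j + 1 : ℕ) * h) ⊆ Set.Ioo a (a + N * h) := by
    intro j hj
    apply Set.Ioo_subset_Ioo
    · nlinarith [Nat.cast_nonneg (α := ℝ) j]
    · have : ((j : ℝ) + 1) ≤ (N : ℝ) := by exact_mod_cast hj
      push_cast
      nlinarith
  have hii : ∀ j : ℕ, j < N →
      IntervalIntegrable f volume (a + j * h) (a + (j + 1 : ℕ) * h) := by
    intro j hj
    rw [intervalIntegrable_iff_integrableOn_Ioo_of_le (by push_cast; nlinarith)]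
    exact hf.mono_set (hsub j hj)
  have := intervalIntegral.sum_integral_adjacent_intervals (a := fun j : ℕ => a + j * h) hii
  simp only [Nat.cast_zero, zero_mul, add_zero] at this
  calc ∑ j ∈ Finset.range N, ∫ x in Set.Ioo (a + j * h) (a + (j + 1 : ℕ) * h), f x
      = ∑ j ∈ Finset.range N, ∫ x in (a + j * h)..(a + (j + 1 : ℕ) * h), f x := by
        refine Finset.sum_congr rfl fun j hj => ?_
        rw [intervalIntegral.integral_of_le (by push_cast; nlinarith),
          MeasureTheory.integral_Ioc_eq_integral_Ioo]
    _ = ∫ x in a..(a + N * h), f x := this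
    _ = ∫ x in Set.Ioo a (a + N * h), f x := by
        rw [intervalIntegral.integral_of_le (by nlinarith [Nat.cast_nonneg (α := ℝ) N]),
          MeasureTheory.integral_Ioc_eq_integral_Ioo]

set_option maxHeartbeats 1000000 in
/-- **Lower bound (Lemma 3.3).**
Let `n ≥ 2`, `W` satisfy (W1)–(W3), and `λₙ > 0` satisfy the nonlinear interpolation
inequality on every open bounded interval.  Let `λ ∈ (0, λₙ)`, let `I = (a,b)` be an open
bounded interval and `δ > 0`.  Then there is `ε₀ > 0` such that for all `u ∈ W^{n,2}(I)`
and all `ε ∈ (0, ε₀)`, `(1 - λ/λₙ - δ) G_ε^{0,n}[u] ≤ G_ε^{λ,n}[u]`. -/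
theorem lower_bound_same_order
    (n : ℕ) (hn : 2 ≤ n) (W : ℝ → ℝ) (L : ℝ) (hL : 0 < L)
    (hWcont : Continuous W) (hWnonneg : ∀ t, 0 ≤ W t)
    (hWzero : ∀ t, W t = 0 ↔ (t = 1 ∨ t = -1))
    (hWcoerpos : ∀ t : ℝ, 0 < t → L * (t - 1) ^ 2 ≤ W t)
    (hWcoerneg : ∀ t : ℝ, t < 0 → L * (t + 1) ^ 2 ≤ W t)
    (lamn : ℝ) (hlamn : 0 < lamn)
    (hint : ∀ a b : ℝ, a < b → ∀ u : ℝ → ℝ,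
        ContDiffOn ℝ n u (Set.Ioo a b) →
        (∀ k ≤ n, IntegrableOn
          (fun x => (iteratedDerivWithin k u (Set.Ioo a b) x) ^ 2) (Set.Ioo a b)) →
        IntegrableOn (fun x => W (u x)) (Set.Ioo a b) →
        lamn * ∫ x in Set.Ioo a b, (iteratedDerivWithin (n - 1) u (Set.Ioo a b) x) ^ 2 ≤
          (1 / (b - a) ^ (2 * n - 2)) * (∫ x in Set.Ioo a b, W (u x)) +
            (b - a) ^ 2 * ∫ x in Set.Ioo a b, (iteratedDerivWithin n u (Set.Ioo a b) x) ^ 2)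
    (lam : ℝ) (hlam0 : 0 < lam) (hlam1 : lam < lamn)
    (a b : ℝ) (hab : a < b) (δ : ℝ) (hδ : 0 < δ) :
    ∃ eps0 : ℝ, 0 < eps0 ∧
      ∀ u : ℝ → ℝ,
        ContDiffOn ℝ n u (Set.Ioo a b) →
        (∀ k ≤ n, IntegrableOn
          (fun x => (iteratedDerivWithin k u (Set.Ioo a b) x) ^ 2) (Set.Ioo a b)) →
        IntegrableOn (fun x => W (u x)) (Set.Ioo a b) →
        ∀ eps : ℝ, 0 < eps → eps < eps0 →
          (1 - lam / lamn - δ) * Gfun W n a b eps 0 u ≤ Gfun W n a b eps lam u := by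
  have hdl : 0 < δ * lamn / lam := by positivity
  set c : ℝ := Real.sqrt (1 + δ * lamn / lam) with hc
  have hc1 : 1 < c := by
    have h1 : (0:ℝ) ≤ 1 + δ * lamn / lam := by linarith
    nlinarith [Real.sq_sqrt h1, Real.sqrt_nonneg (1 + δ * lamn / lam)]
  have hc0 : 0 < c := by linarith
  have hcsq : c ^ 2 = 1 + δ * lamn / lam := Real.sq_sqrt (by linarith)
  have hba : 0 < b - a := sub_pos.mpr hab
  have hfrac : 0 < 1 - 1 / c := by
    have : 1 / c < 1 := by rw [div_lt_one hc0]; exact hc1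
    linarith
  refine ⟨(b - a) * (1 - 1 / c), by positivity, ?_⟩
  intro u hu hk hW eps heps hepslt
  have heps0lt : (b - a) * (1 - 1 / c) < b - a := by
    have hc' : (0:ℝ) < 1 / c := by positivity
    nlinarith
  have hepsba : eps < b - a := lt_trans hepslt heps0lt
  -- the partition
  set N : ℕ := ⌊(b - a) / eps⌋₊ with hNdef
  have hN1 : 1 ≤ N := by
    apply Nat.le_floor
    rw [le_div_iff₀ heps]
    simpa using hepsba.le
  have hNpos : (0 : ℝ) < N := by exact_mod_cast hN1
  set h : ℝ := (b - a) / N with hhdef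
  have hh0 : 0 < h := div_pos hba hNpos
  have hεh : eps ≤ h := by
    rw [hhdef, le_div_iff₀ hNpos]
    have := Nat.floor_le (a := (b - a) / eps) (by positivity)
    calc (eps : ℝ) * N ≤ eps * ((b - a) / eps) := by
          apply mul_le_mul_of_nonneg_left _ heps.le
          exact_mod_cast this
      _ = b - a := by field_simp
  have hhc : h < c * eps := by
    have h1 : (b - a) / (c * eps) < N := by
      have h2 : (b - a) / eps - 1 < (N : ℝ) := Nat.sub_one_lt_floor _
      have key : (b - a) / c ≤ (b - a) - eps := by
        have expand : (b - a) * (1 - 1 / c) = (b - a) - (b - a) / c := by ring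
        nlinarith [hepslt.le]
      have h3 : (b - a) / (c * eps) ≤ (b - a) / eps - 1 := by
        have e1 : (b - a) / (c * eps) = ((b - a) / c) / eps := by ring
        have e2 : (b - a) / eps - 1 = ((b - a) - eps) / eps := by field_simp
        rw [e1, e2]
        gcongr
      linarith
    rw [hhdef, div_lt_iff₀ hNpos]
    rw [div_lt_iff₀ (by positivity)] at h1
    linarith [h1]
  have hhsq : h ^ 2 ≤ (1 + δ * lamn / lam) * eps ^ 2 := by
    have : h ^ 2 ≤ (c * eps) ^ 2 := by nlinarith
    nlinarith [hcsq]
  -- the endpoint identity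
  have hend : a + N * h = b := by
    rw [hhdef]
    field_simp
    ring
  have hsub : ∀ j : ℕ, j < N → Set.Ioo (a + j * h) (a + (j + 1 : ℕ) * h) ⊆ Set.Ioo a b := by
    intro j hj
    rw [← hend]
    apply Set.Ioo_subset_Ioo
    · nlinarith [Nat.cast_nonneg (α := ℝ) j]
    · have : ((j : ℝ) + 1) ≤ (N : ℝ) := by exact_mod_cast hj
      push_cast
      nlinarith
  -- EqOn for iterated derivatives on subintervals
  have heqOn : ∀ k : ℕ, ∀ j : ℕ, j < N → ∀ x ∈ Set.Ioo (a + j * h) (a + (j + 1 : ℕ) * h),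
      iteratedDerivWithin k u (Set.Ioo (a + j * h) (a + (j + 1 : ℕ) * h)) x
        = iteratedDerivWithin k u (Set.Ioo a b) x := by
    intro k j hj x hx
    rw [iterWithin_open' k u isOpen_Ioo hx, iterWithin_open' k u isOpen_Ioo (hsub j hj hx)]
  -- per-interval interpolation inequality
  have hkeyj : ∀ j : ℕ, j < N →
      lamn * ∫ x in Set.Ioo (a + j * h) (a + (j + 1 : ℕ) * h),
          (iteratedDerivWithin (n - 1) u (Set.Ioo a b) x) ^ 2 ≤
        (1 / h ^ (2 * n - 2)) *
            (∫ x in Set.Ioo (a + j * h) (a + (j + 1 : ℕ) * h), W (u x)) +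
          h ^ 2 * ∫ x in Set.Ioo (a + j * h) (a + (j + 1 : ℕ) * h),
            (iteratedDerivWithin n u (Set.Ioo a b) x) ^ 2 := by
    intro j hj
    have hlt : a + j * h < a + (j + 1 : ℕ) * h := by push_cast; nlinarith
    have hdiff : (a + (j + 1 : ℕ) * h) - (a + j * h) = h := by push_cast; ring
    have hu' := hu.mono (hsub j hj)
    have hk' : ∀ k ≤ n, IntegrableOn
        (fun x => (iteratedDerivWithin k u (Set.Ioo (a + j * h) (a + (j + 1 : ℕ) * h)) x) ^ 2)
        (Set.Ioo (a + j * h) (a + (j + 1 : ℕ) * h)) := by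
      intro k hkn
      refine ((hk k hkn).mono_set (hsub j hj)).congr_fun ?_ measurableSet_Ioo
      intro x hx
      simp only [heqOn k j hj x hx]
    have hW' := hW.mono_set (hsub j hj)
    have H := hint (a + j * h) (a + (j + 1 : ℕ) * h) hlt u hu' hk' hW'
    rw [hdiff] at H
    have e1 : (∫ x in Set.Ioo (a + j * h) (a + (j + 1 : ℕ) * h),
        (iteratedDerivWithin (n - 1) u (Set.Ioo (a + j * h) (a + (j + 1 : ℕ) * h)) x) ^ 2)
        = ∫ x in Set.Ioo (a + j * h) (a + (j + 1 : ℕ) * h),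
          (iteratedDerivWithin (n - 1) u (Set.Ioo a b) x) ^ 2 := by
      refine setIntegral_congr_fun measurableSet_Ioo fun x hx => ?_
      simp only [heqOn (n - 1) j hj x hx]
    have e2 : (∫ x in Set.Ioo (a + j * h) (a + (j + 1 : ℕ) * h),
        (iteratedDerivWithin n u (Set.Ioo (a + j * h) (a + (j + 1 : ℕ) * h)) x) ^ 2)
        = ∫ x in Set.Ioo (a + j * h) (a + (j + 1 : ℕ) * h),
          (iteratedDerivWithin n u (Set.Ioo a b) x) ^ 2 := by
      refine setIntegral_congr_fun measurableSet_Ioo fun x hx => ?_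
      simp only [heqOn n j hj x hx]
    rw [e1, e2] at H
    exact H
  -- summing up
  set IW := ∫ x in Set.Ioo a b, W (u x) with hIWdef
  set A := ∫ x in Set.Ioo a b, (iteratedDerivWithin (n - 1) u (Set.Ioo a b) x) ^ 2 with hAdef
  set B := ∫ x in Set.Ioo a b, (iteratedDerivWithin n u (Set.Ioo a b) x) ^ 2 with hBdef
  have hsumW : ∑ j ∈ Finset.range N, (∫ x in Set.Ioo (a + j * h) (a + (j + 1 : ℕ) * h),
      W (u x)) = IW := by
    rw [hIWdef, ← hend]
    exact sum_Ioo_integral _ a h hh0 N (hend ▸ hW)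
  have hsumA : ∑ j ∈ Finset.range N, (∫ x in Set.Ioo (a + j * h) (a + (j + 1 : ℕ) * h),
      (iteratedDerivWithin (n - 1) u (Set.Ioo a b) x) ^ 2) = A := by
    rw [hAdef, ← hend]
    exact sum_Ioo_integral _ a h hh0 N (hend ▸ hk (n - 1) (by omega))
  have hsumB : ∑ j ∈ Finset.range N, (∫ x in Set.Ioo (a + j * h) (a + (j + 1 : ℕ) * h),
      (iteratedDerivWithin n u (Set.Ioo a b) x) ^ 2) = B := by
    rw [hBdef, ← hend]
    exact sum_Ioo_integral _ a h hh0 N (hend ▸ hk n le_rfl)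
  have hkey : lamn * A ≤ (1 / h ^ (2 * n - 2)) * IW + h ^ 2 * B := by
    calc lamn * A = ∑ j ∈ Finset.range N, lamn *
          (∫ x in Set.Ioo (a + j * h) (a + (j + 1 : ℕ) * h),
            (iteratedDerivWithin (n - 1) u (Set.Ioo a b) x) ^ 2) := by
          rw [← Finset.mul_sum, hsumA]
      _ ≤ ∑ j ∈ Finset.range N,
          ((1 / h ^ (2 * n - 2)) *
              (∫ x in Set.Ioo (a + j * h) (a + (j + 1 : ℕ) * h), W (u x)) +
            h ^ 2 * ∫ x in Set.Ioo (a + j * h) (a + (j + 1 : ℕ) * h),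
              (iteratedDerivWithin n u (Set.Ioo a b) x) ^ 2) := by
          exact Finset.sum_le_sum fun j hj => hkeyj j (Finset.mem_range.mp hj)
      _ = (1 / h ^ (2 * n - 2)) * IW + h ^ 2 * B := by
          rw [Finset.sum_add_distrib, ← Finset.mul_sum, ← Finset.mul_sum, hsumW, hsumB]
  -- splitting the functional
  have hIWint : IntegrableOn (fun x => (1 / eps) * W (u x)) (Set.Ioo a b) := hW.const_mul _
  have hGsplit : ∀ l : ℝ, Gfun W n a b eps l u
      = (1 / eps) * IW - l * eps ^ (2 * n - 3) * A + eps ^ (2 * n - 1) * B := by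
    intro l
    have i1 : Integrable (fun x => (1 / eps) * W (u x))
        (volume.restrict (Set.Ioo a b)) := hW.const_mul _
    have i2 : Integrable
        (fun x => l * eps ^ (2 * n - 3) * (iteratedDerivWithin (n - 1) u (Set.Ioo a b) x) ^ 2)
        (volume.restrict (Set.Ioo a b)) := (hk (n - 1) (by omega)).const_mul _
    have i3 : Integrable
        (fun x => eps ^ (2 * n - 1) * (iteratedDerivWithin n u (Set.Ioo a b) x) ^ 2)
        (volume.restrict (Set.Ioo a b)) := (hk n le_rfl).const_mul _
    have i12 : Integrable
        (fun x => (1 / eps) * W (u x)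
          - l * eps ^ (2 * n - 3) * (iteratedDerivWithin (n - 1) u (Set.Ioo a b) x) ^ 2)
        (volume.restrict (Set.Ioo a b)) := i1.sub i2
    unfold Gfun
    rw [integral_add i12 i3, integral_sub i1 i2,
      MeasureTheory.integral_const_mul, MeasureTheory.integral_const_mul,
      MeasureTheory.integral_const_mul]
  -- nonnegativity
  have hIW0 : 0 ≤ IW := integral_nonneg fun x => hWnonneg _
  have hA0 : 0 ≤ A := integral_nonneg fun x => sq_nonneg _
  have hB0 : 0 ≤ B := integral_nonneg fun x => sq_nonneg _
  -- exponent arithmetic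
  have hexp1 : 2 * n - 2 = (2 * n - 3) + 1 := by omega
  have hexp2 : 2 * n - 1 = (2 * n - 3) + 2 := by omega
  have hepspow : (0:ℝ) < eps ^ (2 * n - 3) := pow_pos heps _
  have he1 : eps ^ (2 * n - 3) * (1 / h ^ (2 * n - 2)) ≤ 1 / eps := by
    have hpow : eps ^ (2 * n - 2) ≤ h ^ (2 * n - 2) := pow_le_pow_left₀ heps.le hεh _
    have hpows : (0:ℝ) < eps ^ (2 * n - 2) := pow_pos heps _
    have : eps ^ (2 * n - 3) * (1 / h ^ (2 * n - 2)) ≤ eps ^ (2 * n - 3) * (1 / eps ^ (2 * n - 2)) := by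
      gcongr
    refine le_trans this (le_of_eq ?_)
    rw [hexp1, pow_succ]
    field_simp
  have he2 : eps ^ (2 * n - 3) * h ^ 2 ≤ (1 + δ * lamn / lam) * eps ^ (2 * n - 1) := by
    calc eps ^ (2 * n - 3) * h ^ 2 ≤ eps ^ (2 * n - 3) * ((1 + δ * lamn / lam) * eps ^ 2) := by
          gcongr
      _ = (1 + δ * lamn / lam) * eps ^ (2 * n - 1) := by rw [hexp2, pow_add]; ring
  -- the central estimate
  have hcentral : lam * eps ^ (2 * n - 3) * A ≤
      (lam / lamn + δ) * ((1 / eps) * IW + eps ^ (2 * n - 1) * B) := by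
    have hll : 0 < lam / lamn := div_pos hlam0 hlamn
    have step1 : lam * eps ^ (2 * n - 3) * A ≤
        (lam / lamn) * (eps ^ (2 * n - 3) * ((1 / h ^ (2 * n - 2)) * IW + h ^ 2 * B)) := by
      have h1 : (lam / lamn) * (lamn * A) ≤
          (lam / lamn) * ((1 / h ^ (2 * n - 2)) * IW + h ^ 2 * B) :=
        mul_le_mul_of_nonneg_left hkey hll.le
      have h2 : (lam / lamn) * (lamn * A) = lam * A := by
        field_simp
      nlinarith [hepspow]
    have step2 : eps ^ (2 * n - 3) * ((1 / h ^ (2 * n - 2)) * IW + h ^ 2 * B) ≤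
        (1 / eps) * IW + (1 + δ * lamn / lam) * eps ^ (2 * n - 1) * B := by
      have t1 := mul_le_mul_of_nonneg_right he1 hIW0
      have t2 := mul_le_mul_of_nonneg_right he2 hB0
      nlinarith [t1, t2]
    have step3 : (lam / lamn) * ((1 / eps) * IW + (1 + δ * lamn / lam) * eps ^ (2 * n - 1) * B)
        ≤ (lam / lamn + δ) * ((1 / eps) * IW + eps ^ (2 * n - 1) * B) := by
      have hid : (lam / lamn) * (1 + δ * lamn / lam) = lam / lamn + δ := by field_simp
      have hIe : 0 ≤ (1 / eps) * IW := by positivity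
      have hBe : 0 ≤ eps ^ (2 * n - 1) * B := by positivity
      nlinarith [hid, hIe, hBe]
    calc lam * eps ^ (2 * n - 3) * A ≤
        (lam / lamn) * (eps ^ (2 * n - 3) * ((1 / h ^ (2 * n - 2)) * IW + h ^ 2 * B)) := step1
      _ ≤ (lam / lamn) * ((1 / eps) * IW + (1 + δ * lamn / lam) * eps ^ (2 * n - 1) * B) :=
          mul_le_mul_of_nonneg_left step2 hll.le
      _ ≤ (lam / lamn + δ) * ((1 / eps) * IW + eps ^ (2 * n - 1) * B) := step3
  rw [hGsplit 0, hGsplit lam]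
  nlinarith [hcentral]
end

section
/- Let n ∈ ℕ with n ≥ 2, let W satisfy (W1)–(W3), and let λ_n > 0 be a constant for which the nonlinear interpolation inequality holds on every open bounded interval. Let λ ∈ (0, λ_n), let I ⊂ ℝ be an open bounded interval, and let δ > 0. Then there exists ε₀ > 0 such that for every ε ∈ (0, ε₀) and every u ∈ W^{n,2}(I), one has ((λ_n − λ)/(λ_n + 1) − δ) · G_ε^{0,n−1}[u] ≤ G_ε^{λ,n}[u]. -/
open MeasureTheory Set Filter Topology

/-- The lower-order unperturbed energy
`G_ε^{0,n-1}[u] = ∫_I (1/ε) W(u) + ε^{2n-3} (u^{(n-1)})² dx` on `I = (a,b)`. -/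
noncomputable def GlowOrder (W : ℝ → ℝ) (n : ℕ) (a b eps : ℝ) (u : ℝ → ℝ) : ℝ :=
  ∫ x in Set.Ioo a b,
    ((1 / eps) * W (u x)
      + eps ^ (2 * n - 3) * (iteratedDerivWithin (n - 1) u (Set.Ioo a b) x) ^ 2)

lemma iterDeriv_open_sub (u : ℝ → ℝ) (k : ℕ) {s t : Set ℝ} (hs : IsOpen s) (ht : IsOpen t)
    (hst : s ⊆ t) : Set.EqOn (iteratedDerivWithin k u s) (iteratedDerivWithin k u t) s := by
  intro x hx
  rw [iteratedDerivWithin, iteratedDerivWithin,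
    iteratedFDerivWithin_of_isOpen k hs hx, iteratedFDerivWithin_of_isOpen k ht (hst hx)]

lemma integral_Ioo_partition {f : ℝ → ℝ} {a b : ℝ} (hab : a < b) (N : ℕ) (hN : 0 < N)
    (hf : IntegrableOn f (Set.Ioo a b)) :
    ∫ x in Set.Ioo a b, f x =
      ∑ j ∈ Finset.range N,
        ∫ x in Set.Ioo (a + j * ((b - a) / N)) (a + (j + 1) * ((b - a) / N)), f x := by
  set h : ℝ := (b - a) / N with hhdef
  have hN0 : (N : ℝ) ≠ 0 := Nat.cast_ne_zero.mpr hN.ne'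
  have hh0 : 0 ≤ h := div_nonneg (by linarith) (Nat.cast_nonneg N)
  set g : ℕ → ℝ := fun j => a + j * h with hgdef
  have hle : ∀ i j : ℕ, i ≤ j → g i ≤ g j := by
    intro i j hij
    have : (i : ℝ) ≤ j := Nat.cast_le.mpr hij
    simp only [hgdef]
    nlinarith
  have hg0 : g 0 = a := by simp [hgdef]
  have hgN : g N = b := by
    simp only [hgdef, hhdef]
    field_simp
    ring
  have hsub : ∀ k : ℕ, k < N → Set.Ioc (g k) (g (k + 1)) ⊆ Set.Ioc a b := by
    intro k hk
    apply Set.Ioc_subset_Ioc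
    · rw [← hg0]; exact hle 0 k (Nat.zero_le _)
    · rw [← hgN]; exact hle (k + 1) N hk
  have hfIoc : IntegrableOn f (Set.Ioc a b) := by
    rwa [integrableOn_Ioc_iff_integrableOn_Ioo]
  have hii : ∀ k < N, IntervalIntegrable f volume (g k) (g (k + 1)) := by
    intro k hk
    rw [intervalIntegrable_iff_integrableOn_Ioc_of_le (hle k (k + 1) (Nat.le_succ k))]
    exact hfIoc.mono_set (hsub k hk)
  have hsum := intervalIntegral.sum_integral_adjacent_intervals hii
  rw [hg0, hgN] at hsum
  have hIoo : ∫ x in Set.Ioo a b, f x = ∫ x in a..b, f x := by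
    rw [intervalIntegral.integral_of_le hab.le, integral_Ioc_eq_integral_Ioo]
  rw [hIoo, ← hsum]
  apply Finset.sum_congr rfl
  intro j hj
  rw [intervalIntegral.integral_of_le (hle j (j + 1) (Nat.le_succ j)),
    integral_Ioc_eq_integral_Ioo]
  have e1 : g j = a + j * ((b - a) / N) := rfl
  have e2 : g (j + 1) = a + (↑j + 1) * ((b - a) / N) := by
    simp [hgdef, hhdef]
  rw [e1, e2]

lemma Gfun_eq (W : ℝ → ℝ) (n : ℕ) (a b eps lam : ℝ) (u : ℝ → ℝ)
    (hIW : IntegrableOn (fun x => W (u x)) (Set.Ioo a b))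
    (hB : IntegrableOn (fun x => (iteratedDerivWithin (n - 1) u (Set.Ioo a b) x) ^ 2) (Set.Ioo a b))
    (hC : IntegrableOn (fun x => (iteratedDerivWithin n u (Set.Ioo a b) x) ^ 2) (Set.Ioo a b)) :
    Gfun W n a b eps lam u =
      (1 / eps) * (∫ x in Set.Ioo a b, W (u x))
        - lam * eps ^ (2 * n - 3) *
            (∫ x in Set.Ioo a b, (iteratedDerivWithin (n - 1) u (Set.Ioo a b) x) ^ 2)
        + eps ^ (2 * n - 1) *
            (∫ x in Set.Ioo a b, (iteratedDerivWithin n u (Set.Ioo a b) x) ^ 2) := by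
  unfold Gfun
  have h1 : Integrable (fun x => (1 / eps) * W (u x)
      - lam * eps ^ (2 * n - 3) * (iteratedDerivWithin (n - 1) u (Set.Ioo a b) x) ^ 2)
      (volume.restrict (Set.Ioo a b)) := by
    exact (hIW.const_mul _).sub (hB.const_mul _)
  rw [integral_add h1 (hC.const_mul _),
    integral_sub (hIW.const_mul _) (hB.const_mul _),
    integral_const_mul, integral_const_mul, integral_const_mul]

lemma GlowOrder_eq (W : ℝ → ℝ) (n : ℕ) (a b eps : ℝ) (u : ℝ → ℝ)
    (hIW : IntegrableOn (fun x => W (u x)) (Set.Ioo a b))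
    (hB : IntegrableOn (fun x => (iteratedDerivWithin (n - 1) u (Set.Ioo a b) x) ^ 2) (Set.Ioo a b)) :
    GlowOrder W n a b eps u =
      (1 / eps) * (∫ x in Set.Ioo a b, W (u x))
        + eps ^ (2 * n - 3) *
            (∫ x in Set.Ioo a b, (iteratedDerivWithin (n - 1) u (Set.Ioo a b) x) ^ 2) := by
  unfold GlowOrder
  rw [integral_add (hIW.const_mul _) (hB.const_mul _), integral_const_mul, integral_const_mul]

lemma sub_interval_bound
    (n : ℕ) (W : ℝ → ℝ) (lamn : ℝ)
    (hint : ∀ a b : ℝ, a < b → ∀ u : ℝ → ℝ,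
        ContDiffOn ℝ n u (Set.Ioo a b) →
        (∀ k ≤ n, IntegrableOn
          (fun x => (iteratedDerivWithin k u (Set.Ioo a b) x) ^ 2) (Set.Ioo a b)) →
        IntegrableOn (fun x => W (u x)) (Set.Ioo a b) →
        lamn * ∫ x in Set.Ioo a b, (iteratedDerivWithin (n - 1) u (Set.Ioo a b) x) ^ 2 ≤
          (1 / (b - a) ^ (2 * n - 2)) * (∫ x in Set.Ioo a b, W (u x)) +
            (b - a) ^ 2 * ∫ x in Set.Ioo a b, (iteratedDerivWithin n u (Set.Ioo a b) x) ^ 2)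
    (u : ℝ → ℝ) (a b p q : ℝ) (hap : a ≤ p) (hpq : p < q) (hqb : q ≤ b)
    (hu : ContDiffOn ℝ n u (Set.Ioo a b))
    (hIk : ∀ k ≤ n, IntegrableOn
      (fun x => (iteratedDerivWithin k u (Set.Ioo a b) x) ^ 2) (Set.Ioo a b))
    (hIW : IntegrableOn (fun x => W (u x)) (Set.Ioo a b)) :
    lamn * ∫ x in Set.Ioo p q, (iteratedDerivWithin (n - 1) u (Set.Ioo a b) x) ^ 2 ≤
      (1 / (q - p) ^ (2 * n - 2)) * (∫ x in Set.Ioo p q, W (u x)) +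
        (q - p) ^ 2 * ∫ x in Set.Ioo p q, (iteratedDerivWithin n u (Set.Ioo a b) x) ^ 2 := by
  have hsub : Set.Ioo p q ⊆ Set.Ioo a b := Set.Ioo_subset_Ioo hap hqb
  have hEq : ∀ k : ℕ, Set.EqOn (fun x => (iteratedDerivWithin k u (Set.Ioo p q) x) ^ 2)
      (fun x => (iteratedDerivWithin k u (Set.Ioo a b) x) ^ 2) (Set.Ioo p q) := by
    intro k x hx
    simp only
    rw [iterDeriv_open_sub u k isOpen_Ioo isOpen_Ioo hsub hx]
  have hIk' : ∀ k ≤ n, IntegrableOn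
      (fun x => (iteratedDerivWithin k u (Set.Ioo p q) x) ^ 2) (Set.Ioo p q) := by
    intro k hk
    exact (((hIk k hk).mono_set hsub).congr_fun (fun x hx => ((hEq k) hx).symm)
      measurableSet_Ioo)
  have h1 := hint p q hpq u (hu.mono hsub) hIk' (hIW.mono_set hsub)
  rwa [setIntegral_congr_fun measurableSet_Ioo (hEq (n - 1)),
    setIntegral_congr_fun measurableSet_Ioo (hEq n)] at h1

set_option maxHeartbeats 1000000 in
/-- **Alternative lower bound by the functional of one order lower (Remark 3.5).**
Let `n ≥ 2`, `W` satisfy (W1)–(W3), and `λₙ > 0` satisfy the nonlinear interpolation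
inequality on every open bounded interval.  Let `λ ∈ (0, λₙ)`, let `I = (a,b)` be an open
bounded interval and `δ > 0`.  Then there exists `ε₀ > 0` such that for every
`ε ∈ (0, ε₀)` and every `u ∈ W^{n,2}(I)`,
`((λₙ - λ)/(λₙ + 1) - δ) G_ε^{0,n-1}[u] ≤ G_ε^{λ,n}[u]`. -/
theorem lower_bound_lower_order
    (n : ℕ) (hn : 2 ≤ n) (W : ℝ → ℝ) (L : ℝ) (hL : 0 < L)
    (hWcont : Continuous W) (hWnonneg : ∀ t, 0 ≤ W t)
    (hWzero : ∀ t, W t = 0 ↔ (t = 1 ∨ t = -1))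
    (hWcoerpos : ∀ t : ℝ, 0 < t → L * (t - 1) ^ 2 ≤ W t)
    (hWcoerneg : ∀ t : ℝ, t < 0 → L * (t + 1) ^ 2 ≤ W t)
    (lamn : ℝ) (hlamn : 0 < lamn)
    (hint : ∀ a b : ℝ, a < b → ∀ u : ℝ → ℝ,
        ContDiffOn ℝ n u (Set.Ioo a b) →
        (∀ k ≤ n, IntegrableOn
          (fun x => (iteratedDerivWithin k u (Set.Ioo a b) x) ^ 2) (Set.Ioo a b)) →
        IntegrableOn (fun x => W (u x)) (Set.Ioo a b) →
        lamn * ∫ x in Set.Ioo a b, (iteratedDerivWithin (n - 1) u (Set.Ioo a b) x) ^ 2 ≤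
          (1 / (b - a) ^ (2 * n - 2)) * (∫ x in Set.Ioo a b, W (u x)) +
            (b - a) ^ 2 * ∫ x in Set.Ioo a b, (iteratedDerivWithin n u (Set.Ioo a b) x) ^ 2)
    (lam : ℝ) (hlam0 : 0 < lam) (hlam1 : lam < lamn)
    (a b : ℝ) (hab : a < b) (δ : ℝ) (hδ : 0 < δ) :
    ∃ eps0 : ℝ, 0 < eps0 ∧
      ∀ eps : ℝ, 0 < eps → eps < eps0 →
        ∀ u : ℝ → ℝ,
          ContDiffOn ℝ n u (Set.Ioo a b) →
          (∀ k ≤ n, IntegrableOn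
            (fun x => (iteratedDerivWithin k u (Set.Ioo a b) x) ^ 2) (Set.Ioo a b)) →
          IntegrableOn (fun x => W (u x)) (Set.Ioo a b) →
          ((lamn - lam) / (lamn + 1) - δ) * GlowOrder W n a b eps u ≤
            Gfun W n a b eps lam u := by
  have hlamn1 : (0 : ℝ) < lamn + 1 := by linarith
  obtain ⟨c, hcdef⟩ : ∃ c : ℝ, c = (lamn - lam) / (lamn + 1) - δ := ⟨_, rfl⟩
  rw [← hcdef]
  have hc0 : c * (lamn + 1) = (lamn - lam) - δ * (lamn + 1) := by
    rw [hcdef, sub_mul, div_mul_cancel₀ _ hlamn1.ne']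
  have h1c : 0 < 1 - c := by nlinarith [hc0, mul_pos hδ hlamn1]
  have hepow1 : ∀ eps : ℝ, eps ^ (2 * n - 2) = eps ^ (2 * n - 3) * eps := by
    intro eps; rw [← pow_succ]; congr 1; omega
  have hepow2 : ∀ eps : ℝ, eps ^ (2 * n - 1) = eps ^ (2 * n - 3) * eps ^ 2 := by
    intro eps; rw [← pow_add]; congr 1; omega
  rcases le_or_gt (c + lam) 0 with hκ | hκ
  · refine ⟨1, one_pos, ?_⟩
    intro eps heps _ u hu hIk hIW
    have hB := hIk (n - 1) (by omega)
    have hC := hIk n le_rfl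
    rw [Gfun_eq W n a b eps lam u hIW hB hC, GlowOrder_eq W n a b eps u hIW hB]
    have hA0 : 0 ≤ ∫ x in Set.Ioo a b, W (u x) := integral_nonneg fun x => hWnonneg _
    have hB0 : 0 ≤ ∫ x in Set.Ioo a b,
        (iteratedDerivWithin (n - 1) u (Set.Ioo a b) x) ^ 2 :=
      integral_nonneg fun x => sq_nonneg _
    have hC0 : 0 ≤ ∫ x in Set.Ioo a b,
        (iteratedDerivWithin n u (Set.Ioo a b) x) ^ 2 :=
      integral_nonneg fun x => sq_nonneg _
    have f1 : 0 ≤ (1 - c) * ((1 / eps) * ∫ x in Set.Ioo a b, W (u x)) :=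
      mul_nonneg h1c.le (mul_nonneg (by positivity) hA0)
    have f2 : (c + lam) * (eps ^ (2 * n - 3) * ∫ x in Set.Ioo a b,
        (iteratedDerivWithin (n - 1) u (Set.Ioo a b) x) ^ 2) ≤ 0 :=
      mul_nonpos_of_nonpos_of_nonneg hκ (mul_nonneg (by positivity) hB0)
    have f3 : 0 ≤ eps ^ (2 * n - 1) * ∫ x in Set.Ioo a b,
        (iteratedDerivWithin n u (Set.Ioo a b) x) ^ 2 :=
      mul_nonneg (by positivity) hC0
    nlinarith [f1, f2, f3]
  · have hθ0' : 0 < (c + lam) / lamn := div_pos hκ hlamn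
    obtain ⟨θ, hθdef⟩ : ∃ θ : ℝ, θ = (c + lam) / lamn := ⟨_, rfl⟩
    have hθ0 : 0 < θ := hθdef ▸ hθ0'
    have hθlamn : θ * lamn = c + lam := by rw [hθdef]; exact div_mul_cancel₀ _ hlamn.ne'
    have hθ1 : θ < 1 := by
      rw [hθdef, div_lt_one hlamn]
      nlinarith [hc0, mul_pos hδ hlamn1, mul_pos hlamn hlamn1,
        mul_pos (show (0:ℝ) < lamn - lam by linarith) hlamn]
    have hθc : θ < 1 - c := by
      rw [hθdef, div_lt_iff₀ hlamn]
      nlinarith [hc0, mul_pos hδ hlamn1]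
    obtain ⟨r, hrdef⟩ : ∃ r : ℝ, r = θ / (1 - c) := ⟨_, rfl⟩
    have hr0 : 0 < r := hrdef ▸ div_pos hθ0 h1c
    have hr1 : r < 1 := by rw [hrdef]; exact (div_lt_one h1c).mpr hθc
    have hrc : r * (1 - c) = θ := by rw [hrdef]; exact div_mul_cancel₀ _ h1c.ne'
    have hmpos : (0 : ℝ) < ((2 * n - 2 : ℕ) : ℝ) := by
      exact_mod_cast (by omega : 0 < 2 * n - 2)
    obtain ⟨ρ, hρdef⟩ : ∃ ρ : ℝ, ρ = r ^ (((2 * n - 2 : ℕ) : ℝ))⁻¹ := ⟨_, rfl⟩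
    have hρ0 : 0 < ρ := hρdef ▸ Real.rpow_pos_of_pos hr0 _
    have hρ1 : ρ < 1 := by
      rw [hρdef]
      exact Real.rpow_lt_one hr0.le hr1 (inv_pos.mpr hmpos)
    have hρm : ρ ^ (2 * n - 2) = r := by
      rw [hρdef, ← Real.rpow_natCast (r ^ (((2 * n - 2 : ℕ) : ℝ))⁻¹) (2 * n - 2),
        ← Real.rpow_mul hr0.le, inv_mul_cancel₀ hmpos.ne', Real.rpow_one]
    have hba : 0 < b - a := by linarith
    refine ⟨(b - a) * (1 - ρ) / ρ,
      div_pos (mul_pos hba (by linarith)) hρ0, ?_⟩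
    intro eps heps heps0 u hu hIk hIW
    obtain ⟨N, hNdef⟩ : ∃ N : ℕ, N = ⌈(b - a) / eps⌉₊ := ⟨_, rfl⟩
    have hN : 0 < N := by
      rw [hNdef]; exact Nat.ceil_pos.mpr (div_pos hba heps)
    have hNR : 0 < (N : ℝ) := Nat.cast_pos.mpr hN
    obtain ⟨h, hhdef⟩ : ∃ h : ℝ, h = (b - a) / N := ⟨_, rfl⟩
    have hh0 : 0 < h := hhdef ▸ div_pos hba hNR
    have hhle : h ≤ eps := by
      rw [hhdef, div_le_iff₀ hNR, hNdef]
      calc b - a = eps * ((b - a) / eps) := by field_simp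
        _ ≤ eps * ⌈(b - a) / eps⌉₊ := mul_le_mul_of_nonneg_left (Nat.le_ceil _) heps.le
    have hρeps : ρ * eps ≤ h := by
      rw [hhdef, le_div_iff₀ hNR]
      have hN2 : (N : ℝ) < (b - a) / eps + 1 := by
        rw [hNdef]; exact Nat.ceil_lt_add_one (div_pos hba heps).le
      have heq2 : ρ * eps * ((b - a) / eps + 1) = ρ * (b - a) + ρ * eps := by
        field_simp
      have hf2 : ρ * eps < (b - a) * (1 - ρ) := by
        have := (lt_div_iff₀ hρ0).mp heps0
        nlinarith [this]
      have hf1 : ρ * eps * N < ρ * eps * ((b - a) / eps + 1) :=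
        mul_lt_mul_of_pos_left hN2 (mul_pos hρ0 heps)
      linarith [hf1, hf2, heq2]
    have hB := hIk (n - 1) (by omega)
    have hC := hIk n le_rfl
    have hkey : lamn * (∫ x in Set.Ioo a b,
          (iteratedDerivWithin (n - 1) u (Set.Ioo a b) x) ^ 2)
        ≤ (1 / h ^ (2 * n - 2)) * (∫ x in Set.Ioo a b, W (u x))
          + h ^ 2 * (∫ x in Set.Ioo a b,
              (iteratedDerivWithin n u (Set.Ioo a b) x) ^ 2) := by
      have hAp := integral_Ioo_partition hab N hN hIW
      have hBp := integral_Ioo_partition hab N hN hB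
      have hCp := integral_Ioo_partition hab N hN hC
      rw [← hhdef] at hAp hBp hCp
      rw [hAp, hBp, hCp, Finset.mul_sum, Finset.mul_sum, Finset.mul_sum,
        ← Finset.sum_add_distrib]
      apply Finset.sum_le_sum
      intro j hj
      have hjR : (j : ℝ) + 1 ≤ N := by
        exact_mod_cast Nat.succ_le_of_lt (Finset.mem_range.mp hj)
      have hj0 : (0 : ℝ) ≤ (j : ℝ) := Nat.cast_nonneg j
      have hNh : (N : ℝ) * h = b - a := by
        rw [hhdef]; field_simp
      have hap : a ≤ a + (j : ℝ) * h :=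
        le_add_of_nonneg_right (mul_nonneg hj0 hh0.le)
      have hqb : a + ((j : ℝ) + 1) * h ≤ b := by
        have h1 := add_le_add_left (mul_le_mul_of_nonneg_right hjR hh0.le) a
        linarith [hNh, h1]
      have hpq : a + (j : ℝ) * h < a + ((j : ℝ) + 1) * h :=
        by linarith [mul_lt_mul_of_pos_right (lt_add_one (j : ℝ)) hh0]
      have hsb := sub_interval_bound n W lamn hint u a b
        (a + (j : ℝ) * h) (a + ((j : ℝ) + 1) * h) hap hpq hqb hu hIk hIW
      have hd : (a + ((j : ℝ) + 1) * h) - (a + (j : ℝ) * h) = h := by ring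
      rw [hd] at hsb
      exact hsb
    rw [Gfun_eq W n a b eps lam u hIW hB hC, GlowOrder_eq W n a b eps u hIW hB]
    obtain ⟨A, hAdef⟩ : ∃ A : ℝ, A = ∫ x in Set.Ioo a b, W (u x) := ⟨_, rfl⟩
    obtain ⟨B, hBdef⟩ : ∃ B : ℝ, B = ∫ x in Set.Ioo a b,
      (iteratedDerivWithin (n - 1) u (Set.Ioo a b) x) ^ 2 := ⟨_, rfl⟩
    obtain ⟨C, hCdef⟩ : ∃ C : ℝ, C = ∫ x in Set.Ioo a b,
      (iteratedDerivWithin n u (Set.Ioo a b) x) ^ 2 := ⟨_, rfl⟩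
    rw [← hAdef, ← hBdef, ← hCdef]
    rw [← hAdef, ← hBdef, ← hCdef] at hkey
    have hA0 : 0 ≤ A := hAdef ▸ integral_nonneg fun x => hWnonneg _
    have hB0 : 0 ≤ B := hBdef ▸ integral_nonneg fun x => sq_nonneg _
    have hC0 : 0 ≤ C := hCdef ▸ integral_nonneg fun x => sq_nonneg _
    have hrεm : r * eps ^ (2 * n - 2) ≤ h ^ (2 * n - 2) := by
      calc r * eps ^ (2 * n - 2) = (ρ * eps) ^ (2 * n - 2) := by
            rw [mul_pow, hρm]
        _ ≤ h ^ (2 * n - 2) := pow_le_pow_left₀ (by positivity) hρeps _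
    have hkey2 : θ * eps ^ (2 * n - 2) ≤ (1 - c) * h ^ (2 * n - 2) := by
      calc θ * eps ^ (2 * n - 2) = (1 - c) * (r * eps ^ (2 * n - 2)) := by
            rw [← mul_assoc, mul_comm (1 - c) r, hrc]
        _ ≤ (1 - c) * h ^ (2 * n - 2) := mul_le_mul_of_nonneg_left hrεm h1c.le
    have hcoef1 : θ * (eps ^ (2 * n - 3) * (1 / h ^ (2 * n - 2))) ≤ (1 - c) * (1 / eps) := by
      rw [show θ * (eps ^ (2 * n - 3) * (1 / h ^ (2 * n - 2)))
            = θ * eps ^ (2 * n - 3) / h ^ (2 * n - 2) by ring,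
        show (1 - c) * (1 / eps) = (1 - c) / eps by ring,
        div_le_div_iff₀ (by positivity) heps]
      calc θ * eps ^ (2 * n - 3) * eps = θ * eps ^ (2 * n - 2) := by
            rw [hepow1]; ring
        _ ≤ (1 - c) * h ^ (2 * n - 2) := hkey2
    have hcoef2 : θ * (eps ^ (2 * n - 3) * h ^ 2) ≤ eps ^ (2 * n - 1) := by
      have h2 : h ^ 2 ≤ eps ^ 2 := pow_le_pow_left₀ hh0.le hhle 2
      calc θ * (eps ^ (2 * n - 3) * h ^ 2)
          ≤ θ * (eps ^ (2 * n - 3) * eps ^ 2) :=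
            mul_le_mul_of_nonneg_left
              (mul_le_mul_of_nonneg_left h2 (by positivity)) hθ0.le
        _ ≤ 1 * (eps ^ (2 * n - 3) * eps ^ 2) :=
            mul_le_mul_of_nonneg_right hθ1.le (by positivity)
        _ = eps ^ (2 * n - 1) := by rw [hepow2]; ring
    have hmain : (c + lam) * (eps ^ (2 * n - 3) * B)
        ≤ (1 - c) * ((1 / eps) * A) + eps ^ (2 * n - 1) * C := by
      have final : (c + lam) * (eps ^ (2 * n - 3) * B)
          ≤ (1 - c) * (1 / eps) * A + eps ^ (2 * n - 1) * C := by
        calc (c + lam) * (eps ^ (2 * n - 3) * B)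
            = θ * (eps ^ (2 * n - 3) * (lamn * B)) := by rw [← hθlamn]; ring
          _ ≤ θ * (eps ^ (2 * n - 3) * ((1 / h ^ (2 * n - 2)) * A + h ^ 2 * C)) := by
              apply mul_le_mul_of_nonneg_left _ hθ0.le
              exact mul_le_mul_of_nonneg_left hkey (by positivity)
          _ = θ * (eps ^ (2 * n - 3) * (1 / h ^ (2 * n - 2))) * A
              + θ * (eps ^ (2 * n - 3) * h ^ 2) * C := by ring
          _ ≤ (1 - c) * (1 / eps) * A + eps ^ (2 * n - 1) * C :=
              add_le_add (mul_le_mul_of_nonneg_right hcoef1 hA0)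
                (mul_le_mul_of_nonneg_right hcoef2 hC0)
      linarith [final]
    nlinarith [hmain]
end

section
/- Let n ∈ ℕ with n ≥ 2, let W satisfy (W1)–(W3), let λ_n > 0 be a constant for which the nonlinear interpolation inequality holds on every open bounded interval, and let λ ∈ (0, λ_n). Then (1 − λ/λ_n) · C_W^n ≤ C_W^{λ,n} ≤ C_W^n; in particular, if C_W^n > 0 then C_W^{λ,n} > 0. -/
open MeasureTheory Set Filter Topology

/-- The admissible class `𝒜ⁿ(ℝ)` of optimal-profile competitors: functions in
`W^{n,2}_loc(ℝ)` equal to `1` near `+∞` and to `-1` near `-∞`. -/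
def OptimalProfileAdm (n : ℕ) (f : ℝ → ℝ) : Prop :=
  ContDiff ℝ n f ∧
    ∃ T : ℝ, 0 < T ∧ (∀ x : ℝ, T < x → f x = 1) ∧ (∀ x : ℝ, x < -T → f x = -1)

/-- The optimal-profile energy `∫_ℝ W(f) - λ (f^{(n-1)})² + (f^{(n)})² dx`. -/
noncomputable def profileEnergy (W : ℝ → ℝ) (n : ℕ) (lam : ℝ) (f : ℝ → ℝ) : ℝ :=
  ∫ x : ℝ, (W (f x) - lam * (iteratedDeriv (n - 1) f x) ^ 2 + (iteratedDeriv n f x) ^ 2)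

/-- The optimal-profile constant `C_W^{λ,n}`. -/
noncomputable def CW (W : ℝ → ℝ) (n : ℕ) (lam : ℝ) : ℝ :=
  sInf {c : ℝ | ∃ f : ℝ → ℝ, OptimalProfileAdm n f ∧ c = profileEnergy W n lam f}

lemma aux_iteratedDeriv_const {k : ℕ} (hk : k ≠ 0) (c x : ℝ) :
    iteratedDeriv k (fun _ : ℝ => c) x = 0 := by
  rw [iteratedDeriv_eq_iteratedFDeriv, iteratedFDeriv_const_of_ne hk]
  simp

lemma aux_deriv_zero {k : ℕ} {f : ℝ → ℝ} {T : ℝ} (hk : k ≠ 0)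
    (h1 : ∀ x : ℝ, T < x → f x = 1) (h2 : ∀ x : ℝ, x < -T → f x = -1) {x : ℝ}
    (hx : x < -T ∨ T < x) : iteratedDeriv k f x = 0 := by
  rcases hx with hx | hx
  · rw [Filter.EventuallyEq.iteratedDeriv_eq k (g := fun _ => (-1 : ℝ))
      (by filter_upwards [isOpen_Iio.mem_nhds (show x ∈ Set.Iio (-T) from hx)] with y hy
          exact h2 y hy),
      aux_iteratedDeriv_const hk]
  · rw [Filter.EventuallyEq.iteratedDeriv_eq k (g := fun _ => (1 : ℝ))
      (by filter_upwards [isOpen_Ioi.mem_nhds (show x ∈ Set.Ioi T from hx)] with y hy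
          exact h1 y hy),
      aux_iteratedDeriv_const hk]

/-- Key structural lemma: for an admissible profile `f` there are `A B ≥ 0` with
`λₙ B ≤ A` such that `profileEnergy W n λ f = A - λ B` for every `λ`. -/
lemma profile_key
    (n : ℕ) (hn : 2 ≤ n) (W : ℝ → ℝ)
    (hWcont : Continuous W) (hWnonneg : ∀ t, 0 ≤ W t)
    (hW1 : W 1 = 0) (hWm1 : W (-1) = 0)
    (lamn : ℝ)
    (hint : ∀ a b : ℝ, a < b → ∀ u : ℝ → ℝ,
        ContDiffOn ℝ n u (Set.Ioo a b) →
        (∀ k ≤ n, IntegrableOn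
          (fun x => (iteratedDerivWithin k u (Set.Ioo a b) x) ^ 2) (Set.Ioo a b)) →
        IntegrableOn (fun x => W (u x)) (Set.Ioo a b) →
        lamn * ∫ x in Set.Ioo a b, (iteratedDerivWithin (n - 1) u (Set.Ioo a b) x) ^ 2 ≤
          (1 / (b - a) ^ (2 * n - 2)) * (∫ x in Set.Ioo a b, W (u x)) +
            (b - a) ^ 2 * ∫ x in Set.Ioo a b, (iteratedDerivWithin n u (Set.Ioo a b) x) ^ 2)
    (f : ℝ → ℝ) (hf : OptimalProfileAdm n f) :
    ∃ A B : ℝ, 0 ≤ A ∧ 0 ≤ B ∧ lamn * B ≤ A ∧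
      ∀ lam : ℝ, profileEnergy W n lam f = A - lam * B := by
  obtain ⟨hfC, T, hT, hfp, hfm⟩ := hf
  have hn0 : n ≠ 0 := by omega
  have hn1 : n - 1 ≠ 0 := by omega
  set g1 : ℝ → ℝ := fun x => W (f x) with hg1
  set g2 : ℝ → ℝ := fun x => (iteratedDeriv (n - 1) f x) ^ 2 with hg2
  set g3 : ℝ → ℝ := fun x => (iteratedDeriv n f x) ^ 2 with hg3
  have cont_id : ∀ k, k ≤ n → Continuous (iteratedDeriv k f) := by
    intro k hk
    exact hfC.continuous_iteratedDeriv k (by exact_mod_cast hk)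
  have hg1cont : Continuous g1 := hWcont.comp hfC.continuous
  have hg2cont : Continuous g2 := (cont_id (n - 1) (by omega)).pow 2
  have hg3cont : Continuous g3 := (cont_id n le_rfl).pow 2
  have hz1 : ∀ x : ℝ, x < -T ∨ T < x → g1 x = 0 := by
    intro x hx
    rcases hx with hx | hx
    · simp [hg1, hfm x hx, hWm1]
    · simp [hg1, hfp x hx, hW1]
  have hz2 : ∀ x : ℝ, x < -T ∨ T < x → g2 x = 0 := by
    intro x hx; simp [hg2, aux_deriv_zero hn1 hfp hfm hx]
  have hz3 : ∀ x : ℝ, x < -T ∨ T < x → g3 x = 0 := by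
    intro x hx; simp [hg3, aux_deriv_zero hn0 hfp hfm hx]
  have hout : ∀ {g : ℝ → ℝ}, (∀ x : ℝ, x < -T ∨ T < x → g x = 0) →
      ∀ x ∉ Set.Icc (-T) T, g x = 0 := by
    intro g hg x hx
    apply hg
    rcases lt_or_ge x (-T) with h | h
    · exact Or.inl h
    · right
      by_contra hc
      push_neg at hc
      exact hx (Set.mem_Icc.mpr ⟨h, hc⟩)
  have hI1 : Integrable g1 :=
    hg1cont.integrable_of_hasCompactSupport
      (HasCompactSupport.intro isCompact_Icc (hout hz1))
  have hI2 : Integrable g2 :=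
    hg2cont.integrable_of_hasCompactSupport
      (HasCompactSupport.intro isCompact_Icc (hout hz2))
  have hI3 : Integrable g3 :=
    hg3cont.integrable_of_hasCompactSupport
      (HasCompactSupport.intro isCompact_Icc (hout hz3))
  obtain ⟨M, hM⟩ := exists_nat_gt T
  set a : ℕ → ℝ := fun k => -(M : ℝ) + k with ha
  have hak : ∀ k : ℕ, a (k + 1) = a k + 1 := by
    intro k; simp only [ha]; push_cast; ring
  -- decomposition of the integral into unit intervals
  have hsum : ∀ g : ℝ → ℝ, Integrable g → (∀ x : ℝ, x < -T ∨ T < x → g x = 0) →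
      ∫ x, g x = ∑ k ∈ Finset.range (2 * M), ∫ x in Set.Ioo (a k) (a (k + 1)), g x := by
    intro g hg hgz
    have h1 : ∫ x in Set.Ioo (-(M : ℝ)) (M : ℝ), g x = ∫ x, g x := by
      apply setIntegral_eq_integral_of_forall_compl_eq_zero
      intro x hx
      apply hgz
      simp only [Set.mem_Ioo, not_and_or, not_lt] at hx
      rcases hx with h | h
      · exact Or.inl (lt_of_le_of_lt h (by linarith))
      · exact Or.inr (lt_of_lt_of_le hM h)
    have h2 : ∑ k ∈ Finset.range (2 * M), ∫ x in (a k)..(a (k + 1)), g x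
        = ∫ x in (a 0)..(a (2 * M)), g x :=
      intervalIntegral.sum_integral_adjacent_intervals fun k _ => hg.intervalIntegrable
    have h3 : ∀ k : ℕ, ∫ x in (a k)..(a (k + 1)), g x
        = ∫ x in Set.Ioo (a k) (a (k + 1)), g x := by
      intro k
      rw [intervalIntegral.integral_of_le (by rw [hak k]; linarith),
        MeasureTheory.integral_Ioc_eq_integral_Ioo]
    have h4 : a 0 = -(M : ℝ) := by simp [ha]
    have h5 : a (2 * M) = (M : ℝ) := by simp only [ha]; push_cast; ring
    have h6 : ∫ x in (a 0)..(a (2 * M)), g x = ∫ x in Set.Ioo (-(M : ℝ)) (M : ℝ), g x := by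
      rw [h4, h5, intervalIntegral.integral_of_le (by linarith),
        MeasureTheory.integral_Ioc_eq_integral_Ioo]
    calc ∫ x, g x = ∫ x in Set.Ioo (-(M : ℝ)) (M : ℝ), g x := h1.symm
      _ = ∫ x in (a 0)..(a (2 * M)), g x := h6.symm
      _ = ∑ k ∈ Finset.range (2 * M), ∫ x in (a k)..(a (k + 1)), g x := h2.symm
      _ = ∑ k ∈ Finset.range (2 * M), ∫ x in Set.Ioo (a k) (a (k + 1)), g x := by
          exact Finset.sum_congr rfl fun k _ => h3 k
  -- on an open interval, `iteratedDerivWithin` agrees with `iteratedDeriv`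
  have hIoo_eq : ∀ (c : ℝ) (k : ℕ), ∀ x ∈ Set.Ioo c (c + 1),
      iteratedDerivWithin k f (Set.Ioo c (c + 1)) x = iteratedDeriv k f x := by
    intro c k x hx
    rw [iteratedDerivWithin_eq_iteratedFDerivWithin, iteratedDeriv_eq_iteratedFDeriv,
      iteratedFDerivWithin_of_isOpen k isOpen_Ioo hx]
  -- the interpolation inequality on a unit interval
  have hper : ∀ c : ℝ, lamn * ∫ x in Set.Ioo c (c + 1), g2 x
      ≤ (∫ x in Set.Ioo c (c + 1), g1 x) + ∫ x in Set.Ioo c (c + 1), g3 x := by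
    intro c
    have hcd : ContDiffOn ℝ n f (Set.Ioo c (c + 1)) := hfC.contDiffOn
    have hIk : ∀ k ≤ n, IntegrableOn
        (fun x => (iteratedDerivWithin k f (Set.Ioo c (c + 1)) x) ^ 2)
        (Set.Ioo c (c + 1)) := by
      intro k hk
      have h0 : IntegrableOn (fun x => (iteratedDeriv k f x) ^ 2) (Set.Ioo c (c + 1)) :=
        (((cont_id k hk).pow 2).integrableOn_Icc).mono_set Set.Ioo_subset_Icc_self
      exact h0.congr_fun (fun x hx => by rw [hIoo_eq c k x hx]) measurableSet_Ioo
    have hW : IntegrableOn g1 (Set.Ioo c (c + 1)) := hI1.integrableOn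
    have hkey := hint c (c + 1) (by linarith) f hcd hIk hW
    have e1 : ∫ x in Set.Ioo c (c + 1),
        (iteratedDerivWithin (n - 1) f (Set.Ioo c (c + 1)) x) ^ 2
        = ∫ x in Set.Ioo c (c + 1), g2 x :=
      setIntegral_congr_fun measurableSet_Ioo fun x hx => by
        simp only [hg2]; rw [hIoo_eq c (n - 1) x hx]
    have e2 : ∫ x in Set.Ioo c (c + 1),
        (iteratedDerivWithin n f (Set.Ioo c (c + 1)) x) ^ 2
        = ∫ x in Set.Ioo c (c + 1), g3 x :=
      setIntegral_congr_fun measurableSet_Ioo fun x hx => by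
        simp only [hg3]; rw [hIoo_eq c n x hx]
    rw [e1, e2, show c + 1 - c = (1 : ℝ) by ring, one_pow, one_pow, one_div_one,
      one_mul, one_mul] at hkey
    exact hkey
  -- assemble the global inequality
  have hmain : lamn * ∫ x, g2 x ≤ (∫ x, g1 x) + ∫ x, g3 x := by
    rw [hsum g1 hI1 hz1, hsum g2 hI2 hz2, hsum g3 hI3 hz3, Finset.mul_sum,
      ← Finset.sum_add_distrib]
    apply Finset.sum_le_sum
    intro k _
    have := hper (a k)
    rwa [← hak k] at this
  refine ⟨(∫ x, g1 x) + ∫ x, g3 x, ∫ x, g2 x, ?_, ?_, hmain, ?_⟩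
  · have h1 : 0 ≤ ∫ x, g1 x := integral_nonneg fun x => hWnonneg _
    have h3 : 0 ≤ ∫ x, g3 x := integral_nonneg fun x => sq_nonneg _
    linarith
  · exact integral_nonneg fun x => sq_nonneg _
  · intro lam
    have : profileEnergy W n lam f = ∫ x, (g1 x - lam * g2 x + g3 x) := rfl
    have hI12 : Integrable (fun x => g1 x - lam * g2 x) := hI1.sub (hI2.const_mul lam)
    rw [this, integral_add hI12 hI3, integral_sub hI1 (hI2.const_mul lam), integral_const_mul]
    ring

/-- **Comparison of optimal-profile constants (Proposition 4.3).**
Let `n ≥ 2`, `W` satisfy (W1)–(W3), and `λₙ > 0` satisfy the nonlinear interpolation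
inequality on every open bounded interval, and let `λ ∈ (0, λₙ)`.  Then
`(1 - λ/λₙ) C_W^n ≤ C_W^{λ,n} ≤ C_W^n`; in particular `C_W^n > 0` implies
`C_W^{λ,n} > 0`. -/
theorem optimal_profile_constant_comparison
    (n : ℕ) (hn : 2 ≤ n) (W : ℝ → ℝ) (L : ℝ) (hL : 0 < L)
    (hWcont : Continuous W) (hWnonneg : ∀ t, 0 ≤ W t)
    (hWzero : ∀ t, W t = 0 ↔ (t = 1 ∨ t = -1))
    (hWcoerpos : ∀ t : ℝ, 0 < t → L * (t - 1) ^ 2 ≤ W t)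
    (hWcoerneg : ∀ t : ℝ, t < 0 → L * (t + 1) ^ 2 ≤ W t)
    (lamn : ℝ) (hlamn : 0 < lamn)
    (hint : ∀ a b : ℝ, a < b → ∀ u : ℝ → ℝ,
        ContDiffOn ℝ n u (Set.Ioo a b) →
        (∀ k ≤ n, IntegrableOn
          (fun x => (iteratedDerivWithin k u (Set.Ioo a b) x) ^ 2) (Set.Ioo a b)) →
        IntegrableOn (fun x => W (u x)) (Set.Ioo a b) →
        lamn * ∫ x in Set.Ioo a b, (iteratedDerivWithin (n - 1) u (Set.Ioo a b) x) ^ 2 ≤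
          (1 / (b - a) ^ (2 * n - 2)) * (∫ x in Set.Ioo a b, W (u x)) +
            (b - a) ^ 2 * ∫ x in Set.Ioo a b, (iteratedDerivWithin n u (Set.Ioo a b) x) ^ 2)
    (lam : ℝ) (hlam0 : 0 < lam) (hlam1 : lam < lamn) :
    (1 - lam / lamn) * CW W n 0 ≤ CW W n lam ∧
      CW W n lam ≤ CW W n 0 ∧
      (0 < CW W n 0 → 0 < CW W n lam) := by
  have hW1 : W 1 = 0 := (hWzero 1).mpr (Or.inl rfl)
  have hWm1 : W (-1) = 0 := (hWzero (-1)).mpr (Or.inr rfl)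
  have key := profile_key n hn W hWcont hWnonneg hW1 hWm1 lamn hint
  set S : ℝ → Set ℝ :=
    fun l => {c : ℝ | ∃ f : ℝ → ℝ, OptimalProfileAdm n f ∧ c = profileEnergy W n l f} with hS
  have hq1 : lam / lamn < 1 := (div_lt_one hlamn).mpr hlam1
  have hq0 : 0 < lam / lamn := div_pos hlam0 hlamn
  -- a concrete admissible profile
  have hadm : OptimalProfileAdm n (fun x => 2 * Real.smoothTransition x - 1) := by
    refine ⟨?_, 1, one_pos, ?_, ?_⟩
    · have h : ContDiff ℝ n Real.smoothTransition := by
        exact_mod_cast Real.smoothTransition.contDiff (n := (n : ℕ∞))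
      exact (contDiff_const.mul h).sub contDiff_const
    · intro x hx
      show 2 * Real.smoothTransition x - 1 = 1
      rw [Real.smoothTransition.one_of_one_le (by linarith)]; ring
    · intro x hx
      show 2 * Real.smoothTransition x - 1 = -1
      rw [Real.smoothTransition.zero_of_nonpos (by linarith)]; ring
  have hne : ∀ l : ℝ, (S l).Nonempty := fun l => ⟨_, _, hadm, rfl⟩
  -- structural facts about the two sets
  have hfacts : ∀ c ∈ S lam, ∃ c0 ∈ S 0, 0 ≤ c0 ∧ (1 - lam / lamn) * c0 ≤ c := by
    rintro c ⟨f, hf, rfl⟩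
    obtain ⟨A, B, hA, hB, hAB, hE⟩ := key f hf
    refine ⟨A, ⟨f, hf, by rw [hE 0]; ring⟩, hA, ?_⟩
    rw [hE lam]
    have hBA : B ≤ A / lamn := by
      rw [le_div_iff₀ hlamn]; linarith [hAB]
    have : lam * B ≤ lam * (A / lamn) :=
      mul_le_mul_of_nonneg_left hBA hlam0.le
    have h2 : lam * (A / lamn) = lam / lamn * A := by ring
    nlinarith
  have hfacts2 : ∀ c0 ∈ S 0, ∃ c ∈ S lam, c ≤ c0 := by
    rintro c0 ⟨f, hf, rfl⟩
    obtain ⟨A, B, hA, hB, hAB, hE⟩ := key f hf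
    refine ⟨profileEnergy W n lam f, ⟨f, hf, rfl⟩, ?_⟩
    rw [hE lam, hE 0]
    nlinarith
  have hbdd0 : BddBelow (S 0) := by
    refine ⟨0, fun c hc => ?_⟩
    rcases hc with ⟨f, hf, rfl⟩
    obtain ⟨A, B, hA, hB, hAB, hE⟩ := key f hf
    rw [hE 0]; linarith
  have hbddlam : BddBelow (S lam) := by
    refine ⟨0, fun c hc => ?_⟩
    obtain ⟨c0, _, hc0, hle⟩ := hfacts c hc
    nlinarith
  have hCW0 : CW W n 0 = sInf (S 0) := rfl
  have hCWl : CW W n lam = sInf (S lam) := rfl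
  have h1 : (1 - lam / lamn) * CW W n 0 ≤ CW W n lam := by
    rw [hCW0, hCWl]
    apply le_csInf (hne lam)
    intro c hc
    obtain ⟨c0, hc0S, hc0, hle⟩ := hfacts c hc
    have : sInf (S 0) ≤ c0 := csInf_le hbdd0 hc0S
    nlinarith
  refine ⟨h1, ?_, ?_⟩
  · rw [hCW0, hCWl]
    apply le_csInf (hne 0)
    intro c0 hc0
    obtain ⟨c, hcS, hle⟩ := hfacts2 c0 hc0
    exact (csInf_le hbddlam hcS).trans hle
  · intro hpos
    have : 0 < (1 - lam / lamn) * CW W n 0 := mul_pos (by linarith) hpos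
    linarith
end

section
/- Let 1 ≤ p, q, r < ∞. Then there exists a constant C = C(q) > 1 (one may take C = 8(q+1)^{1/q}) such that for every open bounded interval I ⊂ ℝ and every u ∈ L^q(I) with second weak derivative u'' ∈ L^r(I), one has ‖u'‖_{L^p(I)} ≤ C ( |I|^{1 + 1/p − 1/r} ‖u''‖_{L^r(I)} + |I|^{−1 + 1/p − 1/q} ‖u‖_{L^q(I)} ). -/
open MeasureTheory Set Filter Topology Real

/-- **Interpolation lemma (Lemma A.2).**
Let `1 ≤ p, q, r < ∞`.  There exists `C = C(q) > 1` such that for every open bounded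
interval `I = (a,b)` and every `u ∈ L^q(I)` with `u'' ∈ L^r(I)`,
`‖u'‖_{L^p(I)} ≤ C (|I|^{1 + 1/p - 1/r} ‖u''‖_{L^r(I)} + |I|^{-1 + 1/p - 1/q} ‖u‖_{L^q(I)})`. -/
theorem interpolation_lemma_second_order (q : ℝ) (hq : 1 ≤ q) :
    ∃ C : ℝ, 1 < C ∧
      ∀ p r : ℝ, 1 ≤ p → 1 ≤ r → ∀ a b : ℝ, a < b → ∀ u : ℝ → ℝ,
        ContDiffOn ℝ 2 u (Set.Ioo a b) →
        MemLp u (ENNReal.ofReal q) (volume.restrict (Set.Ioo a b)) →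
        MemLp (iteratedDerivWithin 2 u (Set.Ioo a b)) (ENNReal.ofReal r)
          (volume.restrict (Set.Ioo a b)) →
        eLpNorm (iteratedDerivWithin 1 u (Set.Ioo a b)) (ENNReal.ofReal p)
            (volume.restrict (Set.Ioo a b)) ≤
          ENNReal.ofReal C *
            (ENNReal.ofReal ((b - a) ^ (1 + 1 / p - 1 / r)) *
                eLpNorm (iteratedDerivWithin 2 u (Set.Ioo a b)) (ENNReal.ofReal r)
                  (volume.restrict (Set.Ioo a b)) +
              ENNReal.ofReal ((b - a) ^ (-1 + 1 / p - 1 / q)) *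
                eLpNorm u (ENNReal.ofReal q) (volume.restrict (Set.Ioo a b))) := by
  refine ⟨37, by norm_num, ?_⟩
  intro p r hp hr a b hab u hu2 huq hur2
  set I : Set ℝ := Set.Ioo a b with hIdef
  have hL : (0:ℝ) < b - a := by linarith
  have hIo : IsOpen I := isOpen_Ioo
  have hIm : MeasurableSet I := measurableSet_Ioo
  haveI : IsFiniteMeasure (volume.restrict I) := by
    constructor
    rw [Measure.restrict_apply_univ]
    simpa [hIdef, Real.volume_Ioo] using ENNReal.ofReal_lt_top
  -- notation
  set f1 := iteratedDerivWithin 1 u I with hf1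
  set f2 := iteratedDerivWithin 2 u I with hf2
  set μ := volume.restrict I with hμ
  -- identification of iterated derivatives
  have hud : UniqueDiffOn ℝ I := hIo.uniqueDiffOn
  have h1 : ∀ x ∈ I, f1 x = deriv u x := by
    intro x hx
    rw [hf1, iteratedDerivWithin_one, derivWithin_of_isOpen hIo hx]
  have h2 : ∀ x ∈ I, f2 x = deriv (deriv u) x := by
    intro x hx
    rw [hf2, iteratedDerivWithin_succ,
      derivWithin_congr (fun y hy => h1 y hy) (h1 x hx), derivWithin_of_isOpen hIo hx]
  -- differentiability facts
  have hcu : ContinuousOn u I := hu2.continuousOn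
  have hcd1 : ContDiffOn ℝ 1 (deriv u) I := hu2.deriv_of_isOpen hIo (by norm_num)
  have hc2 : ContinuousOn (deriv (deriv u)) I :=
    (hcd1.deriv_of_isOpen (m := 0) hIo (by norm_num)).continuousOn
  have hd1 : ∀ x ∈ I, HasDerivAt u (deriv u x) x := by
    intro x hx
    exact ((hu2.differentiableOn (by norm_num)).differentiableAt
      (hIo.mem_nhds hx)).hasDerivAt
  have hd2 : ∀ x ∈ I, HasDerivAt (deriv u) (deriv (deriv u) x) x := by
    intro x hx
    exact ((hcd1.differentiableOn (by norm_num)).differentiableAt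
      (hIo.mem_nhds hx)).hasDerivAt
  -- integrability
  have hInt_u : Integrable u μ := huq.integrable (ENNReal.one_le_ofReal.mpr hq)
  have hInt_f2 : Integrable f2 μ := hur2.integrable (ENNReal.one_le_ofReal.mpr hr)
  have hn_u : IntegrableOn (fun x => ‖u x‖) I volume := hInt_u.norm
  have hn_f2 : IntegrableOn (fun x => ‖f2 x‖) I volume := hInt_f2.norm
  set A := ∫ x in I, ‖f2 x‖ with hA
  set B := ∫ x in I, ‖u x‖ with hB
  have hAnn : 0 ≤ A := integral_nonneg fun x => norm_nonneg _
  have hBnn : 0 ≤ B := integral_nonneg fun x => norm_nonneg _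
  -- points with small |u|
  have haux : ∀ c d : ℝ, a < c → c < d → d < b → d - c = (b-a)/6 →
      ∃ y ∈ Set.Icc c d, ‖u y‖ * (b - a) ≤ 6 * B := by
    intro c d hac hcd hdb hlen
    have hJ : Set.Icc c d ⊆ I := Set.Icc_subset_Ioo hac hdb
    obtain ⟨y, hyJ, hymin⟩ := isCompact_Icc.exists_isMinOn (Set.nonempty_Icc.mpr hcd.le)
      ((hcu.mono hJ).norm)
    refine ⟨y, hyJ, ?_⟩
    have e1 : ∫ _x in Set.Icc c d, ‖u y‖ = ‖u y‖ * ((b-a)/6) := by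
      rw [setIntegral_const, Real.volume_real_Icc_of_le hcd.le,
        smul_eq_mul, hlen, mul_comm]
    have e2 : ∫ _x in Set.Icc c d, ‖u y‖ ≤ ∫ x in Set.Icc c d, ‖u x‖ := by
      refine setIntegral_mono_on ?_ (hn_u.mono_set hJ) measurableSet_Icc
        (fun x hx => isMinOn_iff.mp hymin x hx)
      exact (integrableOn_const_iff).mpr (Or.inr (by rw [Real.volume_Icc]; exact ENNReal.ofReal_lt_top))
    have e3 : ∫ x in Set.Icc c d, ‖u x‖ ≤ B :=
      setIntegral_mono_set hn_u
        (Filter.Eventually.of_forall fun x => norm_nonneg _) hJ.eventuallyLE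
    linarith [e1, e2, e3]
  obtain ⟨y1, hy1J, hy1⟩ := haux (a + (b-a)/6) (a + (b-a)/3) (by linarith) (by linarith)
    (by linarith) (by ring)
  obtain ⟨y2, hy2J, hy2⟩ := haux (a + 2*(b-a)/3) (a + 5*(b-a)/6) (by linarith) (by linarith)
    (by linarith) (by ring)
  have hy12 : y1 < y2 := by
    have := hy1J.2; have := hy2J.1; linarith
  have hgap : (b-a)/3 ≤ y2 - y1 := by
    have := hy1J.2; have := hy2J.1; linarith
  have hsub12 : Set.Icc y1 y2 ⊆ I := by
    have h1 := hy1J.1; have h2 := hy2J.2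
    exact Set.Icc_subset_Ioo (by linarith) (by linarith)
  -- mean value theorem
  obtain ⟨ξ, hξ', hξeq⟩ := exists_hasDerivAt_eq_slope u (deriv u) hy12
    (hcu.mono hsub12) (fun x hx => hd1 x (hsub12 (Set.Ioo_subset_Icc_self hx)))
  have hξI : ξ ∈ I := hsub12 (Set.Ioo_subset_Icc_self hξ')
  have hy21 : (0:ℝ) < y2 - y1 := by linarith
  have hxi : ‖deriv u ξ‖ ≤ 36 * B / (b-a)^2 := by
    have habs : ‖deriv u ξ‖ * (y2 - y1) ≤ ‖u y2‖ + ‖u y1‖ := by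
      rw [hξeq, norm_div, Real.norm_of_nonneg hy21.le, div_mul_cancel₀ _ hy21.ne']
      exact norm_sub_le _ _
    rw [le_div_iff₀ (by positivity)]
    have hA1 := mul_le_mul_of_nonneg_left (mul_le_mul_of_nonneg_right hgap hL.le)
      (norm_nonneg (deriv u ξ))
    have hA2 := mul_le_mul_of_nonneg_right habs hL.le
    nlinarith [hA1, hA2, hy1, hy2]
  -- pointwise bound via FTC
  set M : ℝ := 36 * B / (b-a)^2 + A with hM
  have hptw : ∀ x ∈ I, ‖deriv u x‖ ≤ M := by
    intro x hx
    have huIcc : Set.uIcc ξ x ⊆ I := by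
      intro t ht
      obtain ⟨hq1, hq2⟩ := hξI
      obtain ⟨hx1, hx2⟩ := hx
      rcases Set.mem_uIcc.mp ht with ⟨ht1, ht2⟩ | ⟨ht1, ht2⟩ <;>
        exact ⟨by linarith, by linarith⟩
    have hFTC : ∫ t in ξ..x, deriv (deriv u) t = deriv u x - deriv u ξ :=
      intervalIntegral.integral_eq_sub_of_hasDerivAt
        (fun t ht => hd2 t (huIcc ht)) ((hc2.mono huIcc).intervalIntegrable)
    have hsub' : Set.uIoc ξ x ⊆ I := (Set.uIoc_subset_uIcc).trans huIcc
    have hnorm : ‖deriv u x - deriv u ξ‖ ≤ A := by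
      rw [← hFTC]
      refine le_trans (intervalIntegral.norm_integral_le_integral_norm_uIoc) ?_
      have e1 : ∫ t in Set.uIoc ξ x, ‖deriv (deriv u) t‖ = ∫ t in Set.uIoc ξ x, ‖f2 t‖ :=
        setIntegral_congr_fun measurableSet_uIoc (fun t ht => by rw [h2 t (hsub' ht)])
      rw [e1]
      exact setIntegral_mono_set hn_f2
        (Filter.Eventually.of_forall fun t => norm_nonneg _) hsub'.eventuallyLE
    calc ‖deriv u x‖ = ‖deriv u ξ + (deriv u x - deriv u ξ)‖ := by ring_nf
      _ ≤ ‖deriv u ξ‖ + ‖deriv u x - deriv u ξ‖ := norm_add_le _ _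
      _ ≤ M := by rw [hM]; linarith
  have hMnn : 0 ≤ M := by positivity
  -- eLpNorm bound
  have hbound : ∀ᵐ x ∂μ, ‖f1 x‖ ≤ M := by
    rw [hμ, ae_restrict_iff' hIm]
    exact Filter.Eventually.of_forall fun x hx => by rw [h1 x hx]; exact hptw x hx
  have hμuniv : μ Set.univ = ENNReal.ofReal (b - a) := by
    rw [hμ, Measure.restrict_apply_univ, hIdef, Real.volume_Ioo]
  set Lo := ENNReal.ofReal (b - a) with hLo
  have hLo0 : Lo ≠ 0 := by
    rw [hLo, Ne, ENNReal.ofReal_eq_zero]; linarith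
  have hLotop : Lo ≠ ⊤ := ENNReal.ofReal_ne_top
  have key : eLpNorm f1 (ENNReal.ofReal p) μ ≤ Lo ^ (1/p) * ENNReal.ofReal M := by
    have := eLpNorm_le_of_ae_bound (p := ENNReal.ofReal p) hbound
    rwa [hμuniv, ENNReal.toReal_ofReal (by linarith), ← one_div] at this
  -- L¹ bounds by Hölder
  have hLone : ∀ (g : ℝ → ℝ) (s : ℝ), 1 ≤ s → Integrable g μ →
      MemLp g (ENNReal.ofReal s) μ →
      ENNReal.ofReal (∫ x in I, ‖g x‖) ≤
        eLpNorm g (ENNReal.ofReal s) μ * Lo ^ (1 - 1/s) := by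
    intro g s hs hgint hgmem
    have e1 : ENNReal.ofReal (∫ x in I, ‖g x‖) = eLpNorm g 1 μ := by
      rw [eLpNorm_one_eq_lintegral_enorm, ← ofReal_integral_norm_eq_lintegral_enorm hgint]
    rw [e1]
    have := eLpNorm_le_eLpNorm_mul_rpow_measure_univ
      (p := 1) (q := ENNReal.ofReal s) (ENNReal.one_le_ofReal.mpr hs)
      hgmem.aestronglyMeasurable (μ := μ)
    rwa [hμuniv, ENNReal.toReal_one, ENNReal.toReal_ofReal (by linarith),
      one_div_one] at this
  have hAle := hLone f2 r hr hInt_f2 hur2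
  have hBle := hLone u q hq hInt_u huq
  set ER := eLpNorm f2 (ENNReal.ofReal r) μ with hER
  set EQ := eLpNorm u (ENNReal.ofReal q) μ with hEQ
  have hof2 : ENNReal.ofReal (36/(b-a)^2) = ENNReal.ofReal 36 * Lo ^ (-2 : ℝ) := by
    rw [hLo, ENNReal.ofReal_rpow_of_pos hL, ← ENNReal.ofReal_mul (by norm_num)]
    congr 1
    rw [Real.rpow_neg hL.le, show ((2:ℝ)) = ((2:ℕ):ℝ) by norm_num, Real.rpow_natCast]
    field_simp
  calc eLpNorm f1 (ENNReal.ofReal p) μ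
      ≤ Lo ^ (1/p) * ENNReal.ofReal M := key
    _ = Lo ^ (1/p) * (ENNReal.ofReal (36/(b-a)^2) * ENNReal.ofReal B + ENNReal.ofReal A) := by
        rw [hM, show 36 * B / (b-a)^2 = 36/(b-a)^2 * B by ring,
          ENNReal.ofReal_add (by positivity) hAnn, ENNReal.ofReal_mul (by positivity)]
    _ ≤ Lo ^ (1/p) * (ENNReal.ofReal (36/(b-a)^2) * (EQ * Lo ^ (1 - 1/q)) + ER * Lo ^ (1 - 1/r)) := by
        gcongr
    _ = ENNReal.ofReal 36 * (ENNReal.ofReal ((b-a) ^ (-1 + 1/p - 1/q)) * EQ) +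
          ENNReal.ofReal ((b-a) ^ (1 + 1/p - 1/r)) * ER := by
        rw [mul_add, hof2]
        congr 1
        · rw [← ENNReal.ofReal_rpow_of_pos hL,
            show (-1 + 1/p - 1/q) = 1/p + (-2 + (1 - 1/q)) by ring,
            ENNReal.rpow_add (1/p) (-2 + (1 - 1/q)) hLo0 hLotop,
            ENNReal.rpow_add (-2) (1 - 1/q) hLo0 hLotop]
          ring
        · rw [← ENNReal.ofReal_rpow_of_pos hL,
            show (1 + 1/p - 1/r) = 1/p + (1 - 1/r) by ring,
            ENNReal.rpow_add (1/p) (1 - 1/r) hLo0 hLotop]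
          ring
    _ ≤ ENNReal.ofReal 37 *
          (ENNReal.ofReal ((b-a) ^ (1 + 1/p - 1/r)) * ER +
            ENNReal.ofReal ((b-a) ^ (-1 + 1/p - 1/q)) * EQ) := by
        rw [mul_add]
        rw [add_comm (ENNReal.ofReal 37 * _)]
        refine add_le_add ?_ ?_
        · exact mul_le_mul' (ENNReal.ofReal_le_ofReal (by norm_num)) le_rfl
        · nth_rewrite 1 [show ENNReal.ofReal ((b-a) ^ (1 + 1/p - 1/r)) * ER
            = 1 * (ENNReal.ofReal ((b-a) ^ (1 + 1/p - 1/r)) * ER) by rw [one_mul]]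
          exact mul_le_mul' (ENNReal.one_le_ofReal.mpr (by norm_num)) le_rfl
end
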